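/- Let K̂ : F → ℝ and let u : [0,∞) → ℝ^F be a differentiable curve with u(t)_f < 0 for all t ≥ 0 and f ∈ F, satisfying the combinatorial Calabi flow u'(t) = −(DK(u(t)))(K(u(t)) − K̂) for all t ≥ 0, where DK(u) is the Fréchet derivative of the curvature map K at u (i.e. u'(t)_f = −∑_{g ∈ F} (∂K_f/∂u_g)(u(t))·(K_g(u(t)) − K̂_g)). Then the combinatorial Calabi energy t ↦ (1/2)∑_{f ∈ F} (K_f(u(t)) − K̂_f)² is non-increasing on [0,∞). -/

import Mathlib

open Real Finset

/-- The generalized angle `β₁` of a `(1,1,0)` type generalized hyperbolic triangle,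
as an explicit function of `θ, u₁, u₂`. -/
noncomputable def genAngle (θ u₁ u₂ : ℝ) : ℝ :=
  π / 2 - Real.arctan ((u₁ ^ 2 - u₂ ^ 2 - 4 * θ ^ 2) / (4 * θ * u₁))

/-- The generalized combinatorial curvature of a `(1,1,0)` type generalized circle pattern
with face set `F`, edge set `E`, incidence maps `sf, tf : E → F` and angle data `θ : E → ℝ`. -/
noncomputable def curv {F E : Type*} [Fintype E] [DecidableEq F] (sf tf : E → F) (θ : E → ℝ)
    (u : F → ℝ) (f : F) : ℝ :=
  2 * ∑ e ∈ Finset.univ.filter (fun e => sf e = f), genAngle (θ e) (u (sf e)) (u (tf e)) +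
  2 * ∑ e ∈ Finset.univ.filter (fun e => tf e = f), genAngle (θ e) (u (tf e)) (u (sf e))

/-- The partial derivative `∂K_f/∂u_g` of the generalized combinatorial curvature map. -/
noncomputable def partialCurv {F E : Type*} [Fintype E] [DecidableEq F] (sf tf : E → F)
    (θ : E → ℝ) (u : F → ℝ) (f g : F) : ℝ :=
  deriv (fun x => curv sf tf θ (Function.update u g x) f) (u g)

/-! ### Auxiliary derivative computations -/

/-- The common (positive) denominator of the partial derivatives of `genAngle`. -/
noncomputable def dq (θ a b : ℝ) : ℝ := (a^2-b^2)^2 + 8*θ^2*a^2 + 8*θ^2*b^2 + 16*θ^4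

/-- The partial derivative of `genAngle θ` in the first variable. -/
noncomputable def d1 (θ a b : ℝ) : ℝ := -(4*θ*(a^2+b^2+4*θ^2)) / dq θ a b

/-- The partial derivative of `genAngle θ` in the second variable. -/
noncomputable def d2 (θ a b : ℝ) : ℝ := 8*θ*a*b / dq θ a b

lemma dq_pos {θ : ℝ} (hθ : θ ≠ 0) (a b : ℝ) : 0 < dq θ a b := by unfold dq; positivity

lemma d2_symm (θ a b : ℝ) : d2 θ a b = d2 θ b a := by
  unfold d2 dq
  rw [show (a^2-b^2)^2 + 8*θ^2*a^2 + 8*θ^2*b^2 + 16*θ^4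
      = (b^2-a^2)^2 + 8*θ^2*b^2 + 8*θ^2*a^2 + 16*θ^4 from by ring,
     show 8*θ*a*b = 8*θ*b*a from by ring]

lemma hasDerivAt_genAngle_comp {θ : ℝ} (hθ : θ ≠ 0) {x y : ℝ → ℝ} {x' y' t : ℝ}
    (hx : HasDerivAt x x' t) (hy : HasDerivAt y y' t) (hx0 : x t ≠ 0) :
    HasDerivAt (fun τ => genAngle θ (x τ) (y τ))
      (d1 θ (x t) (y t) * x' + d2 θ (x t) (y t) * y') t := by
  have hden : (4*θ*x t) ≠ 0 := mul_ne_zero (mul_ne_zero (by norm_num) hθ) hx0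
  have hn : HasDerivAt (fun τ => x τ^2 - y τ^2 - 4*θ^2)
      (((2:ℕ) * x t ^ 1 * x') - ((2:ℕ) * y t ^ 1 * y')) t :=
    ((hx.pow 2).sub (hy.pow 2)).sub_const _
  have hd : HasDerivAt (fun τ => 4*θ*x τ) (4*θ*x') t := hx.const_mul _
  have hq := hn.fun_div hd hden
  have h := (hq.arctan).const_sub (π/2)
  have hD := (dq_pos hθ (x t) (y t)).ne'
  simp only [genAngle]
  refine h.congr_deriv ?_
  unfold d1 d2
  have h1 : 1 + ((x t^2 - y t^2 - 4*θ^2)/(4*θ*x t))^2 ≠ 0 := by positivity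
  field_simp
  unfold dq
  ring

lemma curv_update_hasDerivAt {F E : Type*} [Fintype E] [DecidableEq F] (sf tf : E → F)
    (θ : E → ℝ) (hθ : ∀ e, 0 < θ e) (u : F → ℝ) (hu : ∀ f, u f ≠ 0) (f g : F) :
    HasDerivAt (fun x => curv sf tf θ (Function.update u g x) f)
      (2 * ∑ e ∈ Finset.univ.filter (fun e => sf e = f),
          (d1 (θ e) (u (sf e)) (u (tf e)) * (if sf e = g then 1 else 0)
           + d2 (θ e) (u (sf e)) (u (tf e)) * (if tf e = g then 1 else 0)) +
       2 * ∑ e ∈ Finset.univ.filter (fun e => tf e = f),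
          (d1 (θ e) (u (tf e)) (u (sf e)) * (if tf e = g then 1 else 0)
           + d2 (θ e) (u (tf e)) (u (sf e)) * (if sf e = g then 1 else 0))) (u g) := by
  have hup : ∀ s : F, HasDerivAt (fun x => Function.update u g x s)
      ((if s = g then 1 else 0 : ℝ)) (u g) := by
    intro s
    rcases eq_or_ne s g with h | h
    · subst h
      simp only [Function.update_self, if_pos rfl]
      exact hasDerivAt_id _
    · simp only [Function.update_of_ne h, if_neg h]
      exact hasDerivAt_const _ _
  have key : ∀ (e : E) (s t : F), HasDerivAt
      (fun x => genAngle (θ e) (Function.update u g x s) (Function.update u g x t))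
      (d1 (θ e) (u s) (u t) * (if s = g then 1 else 0)
        + d2 (θ e) (u s) (u t) * (if t = g then 1 else 0)) (u g) := by
    intro e s t
    have h := hasDerivAt_genAngle_comp (hθ e).ne' (hup s) (hup t)
      (by simp only [Function.update_eq_self]; exact hu s)
    simpa only [Function.update_eq_self] using h
  simp only [curv]
  exact ((HasDerivAt.fun_sum fun e _ => key e (sf e) (tf e)).const_mul 2).add
    ((HasDerivAt.fun_sum fun e _ => key e (tf e) (sf e)).const_mul 2)

lemma partialCurv_eq {F E : Type*} [Fintype E] [DecidableEq F] (sf tf : E → F)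
    (θ : E → ℝ) (hθ : ∀ e, 0 < θ e) (u : F → ℝ) (hu : ∀ f, u f ≠ 0) (f g : F) :
    partialCurv sf tf θ u f g =
      2 * ∑ e ∈ Finset.univ.filter (fun e => sf e = f),
          (d1 (θ e) (u (sf e)) (u (tf e)) * (if sf e = g then 1 else 0)
           + d2 (θ e) (u (sf e)) (u (tf e)) * (if tf e = g then 1 else 0)) +
       2 * ∑ e ∈ Finset.univ.filter (fun e => tf e = f),
          (d1 (θ e) (u (tf e)) (u (sf e)) * (if tf e = g then 1 else 0)
           + d2 (θ e) (u (tf e)) (u (sf e)) * (if sf e = g then 1 else 0)) :=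
  (curv_update_hasDerivAt sf tf θ hθ u hu f g).deriv

lemma partialCurv_symm {F E : Type*} [Fintype E] [DecidableEq F] (sf tf : E → F)
    (θ : E → ℝ) (hθ : ∀ e, 0 < θ e) (u : F → ℝ) (hu : ∀ f, u f ≠ 0) (f g : F) :
    partialCurv sf tf θ u f g = partialCurv sf tf θ u g f := by
  rcases eq_or_ne f g with rfl | hfg
  · rfl
  rw [partialCurv_eq sf tf θ hθ u hu f g, partialCurv_eq sf tf θ hθ u hu g f]
  simp only [Finset.sum_filter, Finset.mul_sum, ← Finset.sum_add_distrib]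
  apply Finset.sum_congr rfl
  intro e _
  rw [d2_symm (θ e) (u (tf e)) (u (sf e))]
  by_cases h1 : sf e = f <;> by_cases h2 : tf e = f <;> by_cases h3 : sf e = g <;>
    by_cases h4 : tf e = g <;>
    simp only [h1, h2, h3, h4, hfg, hfg.symm, if_true, if_false, ite_false, ite_true,
      not_false_iff, mul_zero, zero_mul, mul_one, add_zero, zero_add] <;> try ring

lemma pairing_aux {F E : Type*} [Fintype F] [Fintype E] [DecidableEq F] (c : F → ℝ)
    (d : E → ℝ) (s : Finset E) (a : E → F) :
    ∑ g : F, (∑ e ∈ s, d e * (if a e = g then 1 else 0)) * c g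
      = ∑ e ∈ s, d e * c (a e) := by
  simp only [Finset.sum_mul]
  rw [Finset.sum_comm]
  apply Finset.sum_congr rfl
  intro e _
  simp [mul_ite, ite_mul, mul_one, mul_zero, zero_mul, Finset.sum_ite_eq]

lemma pairing {F E : Type*} [Fintype F] [Fintype E] [DecidableEq F] (sf tf : E → F)
    (θ : E → ℝ) (hθ : ∀ e, 0 < θ e) (u : F → ℝ) (hu : ∀ f, u f ≠ 0) (f : F) (c : F → ℝ) :
    ∑ g, partialCurv sf tf θ u f g * c g =
      2 * ∑ e ∈ Finset.univ.filter (fun e => sf e = f),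
          (d1 (θ e) (u (sf e)) (u (tf e)) * c (sf e) + d2 (θ e) (u (sf e)) (u (tf e)) * c (tf e)) +
      2 * ∑ e ∈ Finset.univ.filter (fun e => tf e = f),
          (d1 (θ e) (u (tf e)) (u (sf e)) * c (tf e) + d2 (θ e) (u (tf e)) (u (sf e)) * c (sf e)) := by
  have h : ∀ g, partialCurv sf tf θ u f g = _ := fun g => partialCurv_eq sf tf θ hθ u hu f g
  simp only [h]
  simp only [add_mul, Finset.sum_add_distrib, mul_assoc]
  rw [← Finset.mul_sum, ← Finset.mul_sum]
  congr 1 <;> · congr 1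
                rw [Finset.sum_add_distrib, pairing_aux, pairing_aux]

theorem calabiEnergy_antitone_along_calabiFlow {F E : Type*} [Fintype F] [Fintype E]
    [Nonempty F] [DecidableEq F] (sf tf : E → F) (θ : E → ℝ) (hθ : ∀ e, 0 < θ e)
    (Khat : F → ℝ) (u : ℝ → F → ℝ)
    (hneg : ∀ t ≥ (0 : ℝ), ∀ f, u t f < 0)
    (hflow : ∀ t ≥ (0 : ℝ), ∀ f,
      HasDerivAt (fun τ => u τ f)
        (-∑ g, partialCurv sf tf θ (u t) f g * (curv sf tf θ (u t) g - Khat g)) t) :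
    AntitoneOn (fun t => (1 / 2) * ∑ f, (curv sf tf θ (u t) f - Khat f) ^ 2)
      (Set.Ici (0 : ℝ)) := by
  have hE : ∀ t ∈ Set.Ici (0:ℝ),
      HasDerivAt (fun τ => (1 / 2 : ℝ) * ∑ f, (curv sf tf θ (u τ) f - Khat f) ^ 2)
        (-∑ g, (∑ h, partialCurv sf tf θ (u t) g h * (curv sf tf θ (u t) h - Khat h))^2) t := by
    intro t ht
    have hne : ∀ f, u t f ≠ 0 := fun f => (hneg t ht f).ne
    have hsym : ∀ f g, partialCurv sf tf θ (u t) f g = partialCurv sf tf θ (u t) g f :=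
      partialCurv_symm sf tf θ hθ (u t) hne
    -- the (pointwise) velocity of the flow
    set v : F → ℝ :=
      fun g => -∑ h, partialCurv sf tf θ (u t) g h * (curv sf tf θ (u t) h - Khat h) with hv
    have hflow' : ∀ f, HasDerivAt (fun τ => u τ f) (v f) t := by
      intro f
      simp only [hv]
      exact hflow t ht f
    -- derivative of each curvature along the flow
    have hK : ∀ f, HasDerivAt (fun τ => curv sf tf θ (u τ) f)
        (∑ g, partialCurv sf tf θ (u t) f g * v g) t := by
      intro f
      have key : ∀ (e : E) (s t' : F), HasDerivAt (fun τ => genAngle (θ e) (u τ s) (u τ t'))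
          (d1 (θ e) (u t s) (u t t') * v s + d2 (θ e) (u t s) (u t t') * v t') t :=
        fun e s t' => hasDerivAt_genAngle_comp (hθ e).ne' (hflow' s) (hflow' t') (hne s)
      rw [pairing sf tf θ hθ (u t) hne f v]
      simp only [curv]
      exact ((HasDerivAt.fun_sum fun e _ => key e (sf e) (tf e)).const_mul 2).add
        ((HasDerivAt.fun_sum fun e _ => key e (tf e) (sf e)).const_mul 2)
    have hEt := (HasDerivAt.fun_sum (fun f (_ : f ∈ Finset.univ) =>
      ((hK f).sub_const (Khat f)).pow 2)).const_mul (1/2 : ℝ)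
    have key2 : ∀ g, ∑ f, (curv sf tf θ (u t) f - Khat f) * (partialCurv sf tf θ (u t) f g * v g)
        = -(∑ h, partialCurv sf tf θ (u t) g h * (curv sf tf θ (u t) h - Khat h))^2 := by
      intro g
      rw [show ∑ f, (curv sf tf θ (u t) f - Khat f) * (partialCurv sf tf θ (u t) f g * v g)
          = (∑ f, partialCurv sf tf θ (u t) g f * (curv sf tf θ (u t) f - Khat f)) * v g from by
        rw [Finset.sum_mul]
        exact Finset.sum_congr rfl fun f _ => by rw [hsym g f]; ring]
      simp only [hv]
      ring
    have main : ∑ f, (curv sf tf θ (u t) f - Khat f) * (∑ g, partialCurv sf tf θ (u t) f g * v g)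
        = -∑ g, (∑ h, partialCurv sf tf θ (u t) g h * (curv sf tf θ (u t) h - Khat h))^2 := by
      calc ∑ f, (curv sf tf θ (u t) f - Khat f) * (∑ g, partialCurv sf tf θ (u t) f g * v g)
          = ∑ f, ∑ g, (curv sf tf θ (u t) f - Khat f) * (partialCurv sf tf θ (u t) f g * v g) :=
            Finset.sum_congr rfl fun f _ => Finset.mul_sum _ _ _
        _ = ∑ g, ∑ f, (curv sf tf θ (u t) f - Khat f) * (partialCurv sf tf θ (u t) f g * v g) :=
            Finset.sum_comm
        _ = ∑ g, -(∑ h, partialCurv sf tf θ (u t) g h * (curv sf tf θ (u t) h - Khat h))^2 :=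
            Finset.sum_congr rfl fun g _ => key2 g
        _ = -∑ g, (∑ h, partialCurv sf tf θ (u t) g h * (curv sf tf θ (u t) h - Khat h))^2 := by
            rw [Finset.sum_neg_distrib]
    refine hEt.congr_deriv ?_
    rw [← main, Finset.mul_sum]
    apply Finset.sum_congr rfl
    intro f _
    norm_num
    ring
  apply antitoneOn_of_deriv_nonpos (convex_Ici 0)
  · exact fun t ht => (hE t ht).continuousAt.continuousWithinAt
  · intro t ht
    rw [interior_Ici] at ht
    exact ((hE t (Set.Ioi_subset_Ici_self ht)).differentiableAt).differentiableWithinAt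
  · intro t ht
    rw [interior_Ici] at ht
    rw [(hE t (Set.Ioi_subset_Ici_self ht)).deriv]
    exact neg_nonpos.mpr (Finset.sum_nonneg fun g _ => sq_nonneg _)
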